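/- Every red/blue/purple colouring R ∪ B ∪ P of K_8 in which the purple graph P is a matching with at least 3 edges contains a clique on 3 vertices in R ∪ P or a clique on 4 vertices in B ∪ P; moreover, there exists a red/blue/purple colouring R ∪ B ∪ P of K_8 in which P is a matching with exactly 2 edges, R ∪ P contains no clique on 3 vertices, and B ∪ P contains no clique on 4 vertices. -/

import Mathlib

/-- The independence number of a graph: the clique number of its complement. -/
noncomputable def indepNumber {V : Type*} (G : SimpleGraph V) : ℕ :=
  Gᶜ.cliqueNum

/-- The Ramsey–Turán number `RT s x n`: the maximum number of edges of an `n`-vertex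
`Kₛ`-free graph whose independence number is `< x`. -/
noncomputable def RT (s : ℕ) (x : ℝ) (n : ℕ) : ℕ :=
  sSup {m | ∃ G : SimpleGraph (Fin n),
    G.CliqueFree s ∧ (indepNumber G : ℝ) < x ∧ G.edgeSet.ncard = m}

/-- `R`, `B`, `P` form a red/blue/purple colouring of `K_n`: a partition of the
edge set of the complete graph into three graphs. -/
def IsRBP {n : ℕ} (R B P : SimpleGraph (Fin n)) : Prop :=
  R ⊔ B ⊔ P = ⊤ ∧ Disjoint R B ∧ Disjoint R P ∧ Disjoint B P

/-- The colouring is `(s,t)`-free: `R ⊔ P` has no `s`-clique and `B ⊔ P` has no `t`-clique. -/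
def IsSTFree {n : ℕ} (R B P : SimpleGraph (Fin n)) (s t : ℕ) : Prop :=
  (R ⊔ P).CliqueFree s ∧ (B ⊔ P).CliqueFree t

/-- The inverse Ramsey number: minimum independence number of an `n`-vertex `Kₛ`-free graph. -/
noncomputable def invRamsey (s n : ℕ) : ℕ :=
  sInf {a | ∃ G : SimpleGraph (Fin n), G.CliqueFree s ∧ indepNumber G = a}

/-- The Ramsey number `R(s,t)`. -/
noncomputable def ramseyNum (s t : ℕ) : ℕ :=
  sInf {n | ∀ G : SimpleGraph (Fin n), ¬ G.CliqueFree s ∨ ¬ Gᶜ.CliqueFree t}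

/-- The graph `P` is a matching: every vertex has at most one neighbour. -/
def IsMatchingGraph {n : ℕ} (P : SimpleGraph (Fin n)) : Prop :=
  ∀ v w w' : Fin n, P.Adj v w → P.Adj v w' → w = w'

/-!
Write `G = R ⊔ P`. Every non-edge of `G` is blue, so `G` is a triangle-free graph on 8 vertices
whose complement has no `K₄`; in such a graph every neighbourhood is independent, so all degrees
are at most 3 and `G` has at most 12 edges. The red graph `R = G \ P` is again triangle-free, and
its complement lies in `B ⊔ P`, so it also has independence number at most 3. Such a graph has at
least 10 edges: every non-neighbourhood has at most 5 vertices (by `R(3,3) = 6`), so all degrees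
are at least 2, and a vertex of degree 2 forces at least three vertices of degree 3 among its
non-neighbours, so the degree sum is at least `2 · 8 + 3`. Hence `P` has at most 2 edges. The
Wagner graph, with two of its diagonals coloured purple and its complement blue, shows that 2
edges are possible.
-/

open Finset

namespace SimpleGraph

variable {V : Type*} {G : SimpleGraph V} {n : ℕ}

theorem IsClique.card_lt_of_cliqueFreeOn {s : Set V} {t : Finset V} (hs : G.CliqueFreeOn s n)
    (hts : ↑t ⊆ s) (ht : G.IsClique (t : Set V)) : #t < n := by
  by_contra! h
  obtain ⟨u, hut, hu⟩ := exists_subset_card_eq h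
  exact hs ((coe_subset.2 hut).trans hts) ⟨ht.subset (coe_subset.2 hut), hu⟩

theorem compl_cliqueFreeOn_two_iff {s : Set V} : Gᶜ.CliqueFreeOn s 2 ↔ G.IsClique s := by
  simp only [cliqueFreeOn_two, IsClique, Set.Pairwise, Pi.compl_apply, compl_adj]
  exact forall₂_congr fun x _ => forall₂_congr fun y _ => forall_congr' fun hxy => by
    simp [hxy]

theorem CliqueFree.cliqueFreeOn_neighborFinset {H : SimpleGraph V} (hH : H.CliqueFree (n + 1))
    (v : V) [Fintype (H.neighborSet v)] :
    H.CliqueFreeOn (H.neighborFinset v) n := by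
  refine CliqueFreeOn.subset _ (fun w hw => ?_)
    (CliqueFreeOn.of_succ _ (hH.cliqueFreeOn (s := Set.univ)) (Set.mem_univ v))
  simpa using hw

section Finite

variable [DecidableRel G.Adj]

theorem card_filter_adj_lt (hG : G.CliqueFree 3) {s : Finset V} (hs : Gᶜ.CliqueFreeOn s n)
    (v : V) : #{w ∈ s | G.Adj v w} < n := by
  refine IsClique.card_lt_of_cliqueFreeOn hs (fun w hw => (mem_filter.1 hw).1)
    ((isClique_compl G).2 ?_)
  exact (isIndepSet_neighborSet_of_triangleFree G hG v).mono fun w hw => (mem_filter.1 hw).2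

theorem degree_lt_of_compl_cliqueFree [Fintype V] (hG : G.CliqueFree 3) (hc : Gᶜ.CliqueFree n)
    (v : V) : G.degree v < n := by
  rw [← card_neighborFinset_eq_degree, neighborFinset_eq_filter]
  exact card_filter_adj_lt hG (hc.cliqueFreeOn (s := ((univ : Finset V) : Set V))) v

theorem two_mul_card_edgeFinset_le [Fintype V] {k : ℕ} (h : ∀ v, G.degree v ≤ k) :
    2 * #G.edgeFinset ≤ Fintype.card V * k := by
  rw [← sum_degrees_eq_twice_card_edges]
  simpa using sum_le_card_nsmul univ _ k fun v _ => h v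

variable [DecidableEq V]

theorem card_le_card_filter_adj_add_three (hG : G.CliqueFree 3) {s : Finset V}
    (hs : Gᶜ.CliqueFreeOn s 3) {v : V} (hv : v ∈ s) : #s ≤ #{w ∈ s | G.Adj v w} + 3 := by
  have hnon : #{w ∈ s | Gᶜ.Adj v w} < 3 := by
    refine IsClique.card_lt_of_cliqueFreeOn (hG.cliqueFreeOn (s := Set.univ))
      (Set.subset_univ _) ?_
    refine compl_cliqueFreeOn_two_iff.1
      (CliqueFreeOn.subset _ (fun w hw => ?_) (CliqueFreeOn.of_succ _ hs hv))
    simpa using hw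
  have hcover : s ⊆ insert v ({w ∈ s | G.Adj v w} ∪ {w ∈ s | Gᶜ.Adj v w}) := by
    intro w hw
    by_cases hwv : w = v
    · simp [hwv]
    · simp only [mem_insert, mem_union, mem_filter, compl_adj]
      tauto
  calc #s ≤ #(insert v ({w ∈ s | G.Adj v w} ∪ {w ∈ s | Gᶜ.Adj v w})) := card_le_card hcover
    _ ≤ #({w ∈ s | G.Adj v w} ∪ {w ∈ s | Gᶜ.Adj v w}) + 1 := card_insert_le _ _
    _ ≤ #{w ∈ s | G.Adj v w} + #{w ∈ s | Gᶜ.Adj v w} + 1 := by grw [card_union_le]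
    _ ≤ #{w ∈ s | G.Adj v w} + 3 := by omega

/-- The local form of `R(3,3) = 6`. -/
theorem card_le_five (hG : G.CliqueFree 3) {s : Finset V} (hs : Gᶜ.CliqueFreeOn s 3) : #s ≤ 5 := by
  obtain rfl | ⟨v, hv⟩ := s.eq_empty_or_nonempty
  · simp
  · have := card_le_card_filter_adj_add_three hG hs hv
    have := card_filter_adj_lt hG hs v
    omega

variable [Fintype V]

theorem card_le_degree_add_six (hG : G.CliqueFree 3) (hc : Gᶜ.CliqueFree 4) (v : V) :
    Fintype.card V ≤ G.degree v + 6 := by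
  have h5 := card_le_five hG (hc.cliqueFreeOn_neighborFinset v)
  rw [card_neighborFinset_eq_degree, degree_compl] at h5
  omega

theorem card_compl_neighborFinset_inter_lt_three (hG : G.CliqueFree 3) (hc : Gᶜ.CliqueFree 4)
    {a b : V} (hab : Gᶜ.Adj a b) : #(Gᶜ.neighborFinset a ∩ Gᶜ.neighborFinset b) < 3 := by
  refine IsClique.card_lt_of_cliqueFreeOn (hG.cliqueFreeOn (s := Set.univ)) (Set.subset_univ _)
    (compl_cliqueFreeOn_two_iff.1 (CliqueFreeOn.subset _ (fun w hw => ?_)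
      (CliqueFreeOn.of_succ _ (hc.cliqueFreeOn_neighborFinset a)
        ((mem_neighborFinset _ _ _).2 hab))))
  simpa using hw

section EightVertices

variable (hV : Fintype.card V = 8) (hG : G.CliqueFree 3) (hc : Gᶜ.CliqueFree 4)
include hV hG hc

theorem three_le_degree_of_adj_of_adj {w x c : V} (hw : G.degree w = 2) (hwx : G.Adj w x)
    (hwc : Gᶜ.Adj w c) (hxc : G.Adj x c) : 3 ≤ G.degree c := by
  set C := Gᶜ.neighborFinset w
  have hC : #C = 5 := by rw [card_neighborFinset_eq_degree, degree_compl, hV, hw]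
  have hcC : c ∈ C := (mem_neighborFinset _ _ _).2 hwc
  have h2 : 2 ≤ #{y ∈ C | G.Adj c y} := by
    have : #C ≤ #{y ∈ C | G.Adj c y} + 3 :=
      card_le_card_filter_adj_add_three hG (hc.cliqueFreeOn_neighborFinset w) hcC
    omega
  have hx : x ∉ {y ∈ C | G.Adj c y} := fun h =>
    ((compl_adj G w x).1 ((mem_neighborFinset _ _ _).1 (mem_filter.1 h).1)).2 hwx
  calc 3 ≤ #(insert x {y ∈ C | G.Adj c y}) := by rw [card_insert_of_notMem hx]; omega
    _ ≤ G.degree c := card_le_card fun y hy => by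
      obtain rfl | hy := mem_insert.1 hy
      · exact (mem_neighborFinset _ _ _).2 hxc.symm
      · exact (mem_neighborFinset _ _ _).2 (mem_filter.1 hy).2

theorem three_le_card_filter_three_le_degree : 3 ≤ #{v | 3 ≤ G.degree v} := by
  by_cases hall : ∀ v, 3 ≤ G.degree v
  · simp [hall, hV]
  obtain ⟨w, hw⟩ := not_forall.1 hall
  have hw2 : G.degree w = 2 := by
    have := card_le_degree_add_six hG hc w
    omega
  obtain ⟨a, b, hab, hN⟩ := card_eq_two.1 hw2
  have hwa : G.Adj w a := (mem_neighborFinset _ _ _).1 (by simp [hN])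
  have hwb : G.Adj w b := (mem_neighborFinset _ _ _).1 (by simp [hN])
  have hab' : Gᶜ.Adj a b :=
    (compl_adj G a b).2 ⟨hab, isIndepSet_neighborSet_of_triangleFree G hG w hwa hwb hab⟩
  have hcommon := card_compl_neighborFinset_inter_lt_three hG hc hab'
  have hC : #(Gᶜ.neighborFinset w) = 5 := by
    rw [card_neighborFinset_eq_degree, degree_compl, hV, hw2]
  calc 3 ≤ #(Gᶜ.neighborFinset w) - #(Gᶜ.neighborFinset a ∩ Gᶜ.neighborFinset b) := by omega
    _ ≤ #(Gᶜ.neighborFinset w \ (Gᶜ.neighborFinset a ∩ Gᶜ.neighborFinset b)) := le_card_sdiff _ _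
    _ ≤ #{v | 3 ≤ G.degree v} := card_le_card fun c hc' => by
      obtain ⟨hwc, hnot⟩ := mem_sdiff.1 hc'
      rw [mem_neighborFinset] at hwc
      have hac : a ≠ c := by rintro rfl; exact ((compl_adj G w a).1 hwc).2 hwa
      have hbc : b ≠ c := by rintro rfl; exact ((compl_adj G w b).1 hwc).2 hwb
      simp only [mem_inter, mem_neighborFinset, compl_adj, not_and, not_not, hac, hbc,
        ne_eq, not_false_eq_true, true_and] at hnot
      refine mem_filter.2 ⟨mem_univ c, ?_⟩
      by_cases hac' : G.Adj a c
      · exact three_le_degree_of_adj_of_adj hV hG hc hw2 hwa hwc hac'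
      · exact three_le_degree_of_adj_of_adj hV hG hc hw2 hwb hwc (hnot hac')

theorem ten_le_card_edgeFinset : 10 ≤ #G.edgeFinset := by
  have hdeg : ∀ v, 2 + (if 3 ≤ G.degree v then 1 else 0) ≤ G.degree v := fun v => by
    have := card_le_degree_add_six hG hc v
    split_ifs <;> omega
  have hsum := sum_le_sum fun v (_ : v ∈ univ) => hdeg v
  rw [sum_add_distrib, sum_const, card_univ, hV, ← card_filter, sum_degrees_eq_twice_card_edges]
    at hsum
  have := three_le_card_filter_three_le_degree hV hG hc
  simp only [smul_eq_mul] at hsum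
  omega

end EightVertices

end Finite

end SimpleGraph

open SimpleGraph

theorem ncard_edgeSet_le_two_of_isRBP {R B P : SimpleGraph (Fin 8)} (hRBP : IsRBP R B P)
    (h3 : (R ⊔ P).CliqueFree 3) (h4 : (B ⊔ P).CliqueFree 4) : P.edgeSet.ncard ≤ 2 := by
  classical
  obtain ⟨htop, -, hRP, -⟩ := hRBP
  have hRc : Rᶜ ≤ B ⊔ P :=
    codisjoint_iff_compl_le_left.1 (codisjoint_iff.2 (by rw [← htop]; ac_rfl))
  have hGc : (R ⊔ P)ᶜ ≤ B :=
    codisjoint_iff_compl_le_left.1 (codisjoint_iff.2 (by rw [← htop]; ac_rfl))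
  have hlow := ten_le_card_edgeFinset (Fintype.card_fin 8) (h3.anti le_sup_left) (h4.anti hRc)
  have hup := two_mul_card_edgeFinset_le fun v =>
    Nat.le_of_lt_succ (degree_lt_of_compl_cliqueFree h3 (h4.anti (hGc.trans le_sup_left)) v)
  have hsum : (R ⊔ P).edgeSet.ncard = R.edgeSet.ncard + P.edgeSet.ncard := by
    rw [edgeSet_sup, Set.ncard_union_eq (disjoint_edgeSet.2 hRP)]
  rw [← Set.ncard_coe_finset, coe_edgeFinset] at hlow hup
  rw [Fintype.card_fin] at hup
  omega

/-- The Wagner graph: the 8-cycle with its four long diagonals. It is triangle-free with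
independence number 3, the extremal graph for `R(3,4) = 9`. -/
def wagnerGraph : SimpleGraph (Fin 8) := circulantGraph {1, 4}

def twoDiagonals : SimpleGraph (Fin 8) := fromRel fun x y => (x, y) = (0, 4) ∨ (x, y) = (1, 5)

instance : DecidableRel wagnerGraph.Adj := inferInstanceAs (DecidableRel (circulantGraph _).Adj)

instance : DecidableRel twoDiagonals.Adj := fun _ _ => inferInstanceAs (Decidable (_ ∧ _))

theorem isRBP_sdiff_compl {n : ℕ} {G P : SimpleGraph (Fin n)} (h : P ≤ G) :
    IsRBP (G \ P) Gᶜ P :=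
  ⟨by rw [sup_right_comm, sdiff_sup_cancel h, sup_compl_eq_top],
    disjoint_compl_right.mono_left sdiff_le, disjoint_sdiff_self_left,
    disjoint_compl_left.mono_right h⟩

theorem twoDiagonals_le_wagnerGraph : twoDiagonals ≤ wagnerGraph := by
  intro x y
  revert x y
  decide

theorem isMatchingGraph_twoDiagonals : IsMatchingGraph twoDiagonals := by
  unfold IsMatchingGraph
  decide

theorem ncard_edgeSet_twoDiagonals : twoDiagonals.edgeSet.ncard = 2 := by
  rw [← coe_edgeFinset, Set.ncard_coe_finset]
  decide

set_option maxRecDepth 10000 in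
theorem cliqueFree_three_wagnerGraph : wagnerGraph.CliqueFree 3 := by
  unfold CliqueFree
  decide

set_option maxRecDepth 10000 in
theorem cliqueFree_four_compl_wagnerGraph_sup_twoDiagonals :
    (wagnerGraphᶜ ⊔ twoDiagonals).CliqueFree 4 := by
  unfold CliqueFree
  decide

theorem statement18 :
    (∀ R B P : SimpleGraph (Fin 8), IsRBP R B P → IsMatchingGraph P →
      3 ≤ P.edgeSet.ncard →
      ¬ (R ⊔ P).CliqueFree 3 ∨ ¬ (B ⊔ P).CliqueFree 4) ∧
    (∃ R B P : SimpleGraph (Fin 8), IsRBP R B P ∧ IsMatchingGraph P ∧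
      P.edgeSet.ncard = 2 ∧ (R ⊔ P).CliqueFree 3 ∧ (B ⊔ P).CliqueFree 4) := by
  refine ⟨fun R B P hRBP _ hP => ?_, wagnerGraph \ twoDiagonals, wagnerGraphᶜ, twoDiagonals,
    isRBP_sdiff_compl twoDiagonals_le_wagnerGraph, isMatchingGraph_twoDiagonals,
    ncard_edgeSet_twoDiagonals, ?_, cliqueFree_four_compl_wagnerGraph_sup_twoDiagonals⟩
  · by_contra! h
    have := ncard_edgeSet_le_two_of_isRBP hRBP h.1 h.2
    omega
  · rw [sdiff_sup_cancel twoDiagonals_le_wagnerGraph]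
    exact cliqueFree_three_wagnerGraph
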